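/- arXiv:1701.00869 — 4 statements merged into one kernel-verified Lean document; each statement's English description precedes it below -/
import Mathlib

section
/- Let A be a real symmetric n×n matrix all of whose off-diagonal entries are non-positive. Then A has a lowest eigenvalue whose eigenspace contains an eigenvector all of whose components are non-negative. -/
/-!
Let `μ` be the least eigenvalue of `A`. Then `B = A - μ` is positive semidefinite and has the
same non-positive off-diagonal entries as `A`. For an eigenvector `u` of `μ`, passing to `|u|`
can only lower the quadratic form, because `B i j * u i * u j ≥ B i j * |u i| * |u j|` for
`i ≠ j` while the diagonal terms are unchanged. Hence `|u| ⬝ᵥ B *ᵥ |u| ≤ u ⬝ᵥ B *ᵥ u = 0`, and a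
vector on which a positive semidefinite form vanishes lies in its kernel: `B *ᵥ |u| = 0`.
-/

open Matrix

namespace Matrix

variable {ι : Type*} [Fintype ι]

theorem dotProduct_abs_mulVec_abs_le {B : Matrix ι ι ℝ} (hoff : ∀ i j, i ≠ j → B i j ≤ 0)
    (u : ι → ℝ) : |u| ⬝ᵥ B *ᵥ |u| ≤ u ⬝ᵥ B *ᵥ u := by
  simp only [dotProduct, mulVec, Finset.mul_sum, Pi.abs_apply]
  refine Finset.sum_le_sum fun i _ ↦ Finset.sum_le_sum fun j _ ↦ ?_
  rcases eq_or_ne i j with rfl | hij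
  · rw [mul_left_comm, abs_mul_abs_self, mul_left_comm]
  · have hu : u i * u j ≤ |u i| * |u j| := abs_mul (u i) (u j) ▸ le_abs_self _
    nlinarith [hoff i j hij]

theorem PosSemidef.mulVec_abs_eq_zero {B : Matrix ι ι ℝ} (hB : B.PosSemidef)
    (hoff : ∀ i j, i ≠ j → B i j ≤ 0) {u : ι → ℝ} (hu : B *ᵥ u = 0) : B *ᵥ |u| = 0 := by
  rw [← hB.dotProduct_mulVec_zero_iff, star_trivial]
  refine le_antisymm ?_ (by simpa using hB.dotProduct_mulVec_nonneg |u|)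
  simpa [hu] using dotProduct_abs_mulVec_abs_le hoff u

variable [DecidableEq ι]

open scoped MatrixOrder ComplexOrder in
theorem IsHermitian.posSemidef_sub_algebraMap {𝕜 : Type*} [RCLike 𝕜] {A : Matrix ι ι 𝕜}
    (hA : A.IsHermitian) {μ : ℝ} (hμ : ∀ i, μ ≤ hA.eigenvalues i) :
    (A - algebraMap ℝ _ μ).PosSemidef := by
  change algebraMap ℝ _ μ ≤ A
  rw [algebraMap_le_iff_le_spectrum hA.isSelfAdjoint, hA.spectrum_real_eq_range_eigenvalues]
  rintro _ ⟨i, rfl⟩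
  exact hμ i

theorem sub_algebraMap_mulVec_eq_zero_iff {R : Type*} [CommRing R] {A : Matrix ι ι R} {μ : R}
    {v : ι → R} : (A - algebraMap R _ μ) *ᵥ v = 0 ↔ A *ᵥ v = μ • v := by
  rw [sub_mulVec, sub_eq_zero, Algebra.algebraMap_eq_smul_one, smul_mulVec, one_mulVec]

theorem mem_spectrum_of_mulVec_eq_smul {R : Type*} [CommRing R] {A : Matrix ι ι R} {μ : R}
    {w : ι → R} (hw : w ≠ 0) (hAw : A *ᵥ w = μ • w) : μ ∈ spectrum R A := by
  rw [← spectrum_toLin']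
  exact Module.End.HasEigenvalue.mem_spectrum <| Module.End.hasEigenvalue_of_hasEigenvector
    ⟨Module.End.mem_eigenspace_iff.mpr (by simpa using hAw), hw⟩

end Matrix

/-- A real symmetric n×n matrix with non-positive off-diagonal entries has a
lowest eigenvalue whose eigenspace contains a componentwise non-negative eigenvector. -/
theorem stmt_0 (n : ℕ) (hn : 1 ≤ n) (A : Matrix (Fin n) (Fin n) ℝ)
    (hsymm : ∀ i j, A i j = A j i)
    (hoff : ∀ i j, i ≠ j → A i j ≤ 0) :
    ∃ (μ : ℝ) (v : Fin n → ℝ), v ≠ 0 ∧ A.mulVec v = μ • v ∧ (∀ i, 0 ≤ v i) ∧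
      (∀ (μ' : ℝ) (w : Fin n → ℝ), w ≠ 0 → A.mulVec w = μ' • w → μ ≤ μ') := by
  have hA : A.IsHermitian := IsHermitian.ext_iff.mpr fun i j ↦ hsymm j i
  obtain ⟨i₀, -, hmin⟩ :=
    Finset.univ.exists_min_image hA.eigenvalues ⟨⟨0, hn⟩, Finset.mem_univ _⟩
  set μ := hA.eigenvalues i₀
  have hB : (A - algebraMap ℝ _ μ).PosSemidef :=
    hA.posSemidef_sub_algebraMap fun i ↦ hmin i (Finset.mem_univ i)
  have hBoff : ∀ i j, i ≠ j → (A - algebraMap ℝ _ μ) i j ≤ 0 := fun i j hij ↦ by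
    simpa [algebraMap_matrix_apply, hij] using hoff i j hij
  set u : Fin n → ℝ := ⇑(hA.eigenvectorBasis i₀)
  have hu : u ≠ 0 := by simpa [u] using hA.eigenvectorBasis.orthonormal.ne_zero i₀
  have hBu : (A - algebraMap ℝ _ μ) *ᵥ u = 0 :=
    sub_algebraMap_mulVec_eq_zero_iff.mpr (hA.mulVec_eigenvectorBasis i₀)
  refine ⟨μ, |u|, by simpa using hu, sub_algebraMap_mulVec_eq_zero_iff.mp
    (hB.mulVec_abs_eq_zero hBoff hBu), fun i ↦ abs_nonneg (u i), fun μ' w hw hAw ↦ ?_⟩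
  obtain ⟨i, rfl⟩ :=
    hA.spectrum_real_eq_range_eigenvalues ▸ mem_spectrum_of_mulVec_eq_smul hw hAw
  exact hmin i (Finset.mem_univ i)
end

section
/- Let A be a real symmetric matrix with non-positive off-diagonal entries, and let v be any unit vector. Then the vector v' obtained by replacing each component of v with its absolute value satisfies ⟨v', A v'⟩ ≤ ⟨v, A v⟩. In particular the Rayleigh quotient is not increased by taking componentwise absolute values. -/
open Matrix

/-- Taking componentwise absolute values does not increase the quadratic form of a
real symmetric matrix with non-positive off-diagonal entries. -/
theorem stmt_1 (n : ℕ) (A : Matrix (Fin n) (Fin n) ℝ)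
    (hsymm : ∀ i j, A i j = A j i)
    (hoff : ∀ i j, i ≠ j → A i j ≤ 0)
    (v : Fin n → ℝ) (hv : ∑ i, v i ^ 2 = 1)
    (v' : Fin n → ℝ) (hv' : ∀ i, v' i = |v i|) :
    v' ⬝ᵥ A.mulVec v' ≤ v ⬝ᵥ A.mulVec v := by
  simp only [dotProduct, mulVec, Finset.mul_sum]
  apply Finset.sum_le_sum
  intro i _
  apply Finset.sum_le_sum
  intro j _
  rw [hv' i, hv' j]
  rcases eq_or_ne i j with rfl | hij
  · have : |v i| * (A i i * |v i|) = v i * (A i i * v i) := by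
      rw [mul_left_comm, mul_left_comm (v i)]
      congr 1
      rw [← abs_mul, abs_mul_self]
    linarith
  · have h1 : A i j ≤ 0 := hoff i j hij
    have h2 : v i * v j ≤ |v i| * |v j| := by
      rw [← abs_mul]; exact le_abs_self _
    nlinarith [abs_nonneg (v i), abs_nonneg (v j)]
end

section
/- Consider H(ε) = [[ε + d₁, h],[h, −ε + d₂]] with h > 0. Then the ground-state components satisfy α₁(ε)·α₂(ε) < 0 for all ε, and the linear combination c₁α₁ + c₂α₂ with fixed positive constants c₁, c₂ vanishes for exactly one value of the splitting parameter, namely when α₁/|α₂| = c₂/c₁ (i.e., there exists a unique ε₀ with c₁α₁(ε₀) + c₂α₂(ε₀) = 0). -/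
open Matrix

/-- For H(ε) = [[ε+d₁, h],[h, −ε+d₂]] with h > 0, the ground-state components (with
α₁ ≥ 0) satisfy α₁α₂ < 0 for all ε, and for fixed c₁, c₂ > 0 the combination
c₁α₁ + c₂α₂ vanishes at exactly one value of ε. -/
theorem stmt_10 (h d₁ d₂ c₁ c₂ : ℝ) (hh : 0 < h) (hc₁ : 0 < c₁) (hc₂ : 0 < c₂)
    (H : ℝ → Matrix (Fin 2) (Fin 2) ℝ)
    (hH : ∀ ε, H ε = !![ε + d₁, h; h, -ε + d₂])
    (α : ℝ → Fin 2 → ℝ)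
    (hnorm : ∀ ε, (α ε 0) ^ 2 + (α ε 1) ^ 2 = 1)
    (hsign : ∀ ε, 0 ≤ α ε 0)
    (hev : ∀ ε, ∃ μ : ℝ, (H ε).mulVec (α ε) = μ • (α ε) ∧
      ∀ (μ' : ℝ) (w : Fin 2 → ℝ), w ≠ 0 → (H ε).mulVec w = μ' • w → μ ≤ μ') :
    (∀ ε, α ε 0 * α ε 1 < 0) ∧
      ∃! ε₀ : ℝ, c₁ * α ε₀ 0 + c₂ * α ε₀ 1 = 0 := by
  have key : ∀ ε : ℝ, 0 < α ε 0 ∧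
      h * α ε 1 = -((ε + (d₁ - d₂)/2) + Real.sqrt ((ε + (d₁ - d₂)/2)^2 + h^2)) * α ε 0 := by
    intro ε
    obtain ⟨μ, heqv, hmin⟩ := hev ε
    set k : ℝ := ε + (d₁ - d₂)/2 with hk_def
    set s : ℝ := Real.sqrt (k^2 + h^2) with hs_def
    have hs2 : s^2 = k^2 + h^2 := Real.sq_sqrt (by positivity)
    have hs_nonneg : 0 ≤ s := Real.sqrt_nonneg _
    have hsk : |k| < s := by
      nlinarith [abs_nonneg k, sq_abs k]
    have hs_pos : 0 < s := lt_of_le_of_lt (abs_nonneg k) hsk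
    have he0 : (ε + d₁) * α ε 0 + h * α ε 1 = μ * α ε 0 := by
      have := congrFun heqv 0
      simpa [hH, Matrix.mulVec, dotProduct, Fin.sum_univ_two] using this
    have he1 : h * α ε 0 + (-ε + d₂) * α ε 1 = μ * α ε 1 := by
      have := congrFun heqv 1
      simpa [hH, Matrix.mulVec, dotProduct, Fin.sum_univ_two] using this
    -- explicit eigenvector for the minimal eigenvalue (d₁+d₂)/2 − s
    have hμle : μ ≤ (d₁ + d₂)/2 - s := by
      apply hmin ((d₁ + d₂)/2 - s) ![h, -(k + s)]
      · intro hw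
        have : h = 0 := by simpa using congrFun hw 0
        linarith
      · funext i
        fin_cases i
        · simp [hH, Matrix.mulVec, dotProduct, Fin.sum_univ_two]
          linear_combination (-h) * hk_def
        · simp [hH, Matrix.mulVec, dotProduct, Fin.sum_univ_two]
          linear_combination -hs2 - (s + k) * hk_def
    have e0 : (μ - (ε + d₁)) * α ε 0 = h * α ε 1 := by linear_combination -he0
    have e1 : (μ - (-ε + d₂)) * α ε 1 = h * α ε 0 := by linear_combination -he1
    have h1 : ((ε + d₁ - μ) * (-ε + d₂ - μ) - h^2) * α ε 0 = 0 := by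
      linear_combination (μ - (-ε + d₂)) * e0 + h * e1
    have h2 : ((ε + d₁ - μ) * (-ε + d₂ - μ) - h^2) * α ε 1 = 0 := by
      linear_combination (μ - (ε + d₁)) * e1 + h * e0
    have hD2 : ((ε + d₁ - μ) * (-ε + d₂ - μ) - h^2)^2 = 0 := by
      linear_combination ((ε + d₁ - μ) * (-ε + d₂ - μ) - h^2) * α ε 0 * h1 +
        ((ε + d₁ - μ) * (-ε + d₂ - μ) - h^2) * α ε 1 * h2 -
        ((ε + d₁ - μ) * (-ε + d₂ - μ) - h^2)^2 * hnorm ε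
    have hdet : (ε + d₁ - μ) * (-ε + d₂ - μ) = h^2 := by
      have := pow_eq_zero_iff (n := 2) (by norm_num) |>.mp hD2
      linarith [this]
    have ha : ε + d₁ = (d₁ + d₂)/2 + k := by rw [hk_def]; ring
    have hb : -ε + d₂ = (d₁ + d₂)/2 - k := by rw [hk_def]; ring
    rw [ha, hb] at hdet
    have hδ : 0 ≤ (d₁ + d₂)/2 - s - μ := by linarith
    have hprod : ((d₁ + d₂)/2 - s - μ) * (2*s + ((d₁ + d₂)/2 - s - μ)) = 0 := by
      linear_combination hdet - hs2
    have hμ : μ = (d₁ + d₂)/2 - s := by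
      rcases mul_eq_zero.mp hprod with h' | h'
      · linarith
      · linarith
    have haμ : μ - (ε + d₁) = -(k + s) := by rw [hμ, hk_def]; ring
    have hα0 : 0 < α ε 0 := by
      rcases lt_or_eq_of_le (hsign ε) with hlt | heq0
      · exact hlt
      · exfalso
        have hz : h * α ε 1 = 0 := by linear_combination -e0 + (ε + d₁ - μ) * heq0
        have hz1 : α ε 1 = 0 := by
          rcases mul_eq_zero.mp hz with h' | h'
          · linarith
          · exact h'
        have := hnorm ε
        rw [hz1, ← heq0] at this
        norm_num at this
    refine ⟨hα0, ?_⟩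
    rw [← e0, haμ]
  constructor
  · intro ε
    obtain ⟨hα0, heq⟩ := key ε
    set k : ℝ := ε + (d₁ - d₂)/2 with hk_def
    set s : ℝ := Real.sqrt (k^2 + h^2) with hs_def
    have hs2 : s^2 = k^2 + h^2 := Real.sq_sqrt (by positivity)
    have hs_nonneg : 0 ≤ s := Real.sqrt_nonneg _
    have hsk : |k| < s := by nlinarith [abs_nonneg k, sq_abs k]
    have hks : 0 < k + s := by
      have := neg_abs_le k
      linarith
    have hα1 : α ε 1 < 0 := by nlinarith [heq]
    exact mul_neg_of_pos_of_neg hα0 hα1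
  · refine ⟨(c₁^2 - c₂^2)*h/(2*c₁*c₂) - (d₁-d₂)/2, ?_, ?_⟩
    · set ε₀ : ℝ := (c₁^2 - c₂^2)*h/(2*c₁*c₂) - (d₁-d₂)/2 with hε₀
      obtain ⟨hα0, heq⟩ := key ε₀
      have hkk : ε₀ + (d₁ - d₂)/2 = (c₁^2 - c₂^2)*h/(2*c₁*c₂) := by rw [hε₀]; ring
      rw [hkk] at heq
      have hs : Real.sqrt (((c₁^2 - c₂^2)*h/(2*c₁*c₂))^2 + h^2)
          = (c₁^2 + c₂^2)*h/(2*c₁*c₂) := by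
        rw [show ((c₁^2 - c₂^2)*h/(2*c₁*c₂))^2 + h^2
            = ((c₁^2 + c₂^2)*h/(2*c₁*c₂))^2 from by field_simp; ring]
        exact Real.sqrt_sq (by positivity)
      rw [hs] at heq
      have hc : c₂ * ((c₁^2 - c₂^2)*h/(2*c₁*c₂) + (c₁^2 + c₂^2)*h/(2*c₁*c₂)) = c₁ * h := by
        field_simp
        ring
      have hz : h * (c₁ * α ε₀ 0 + c₂ * α ε₀ 1) = 0 := by
        linear_combination c₂ * heq - α ε₀ 0 * hc
      rcases mul_eq_zero.mp hz with h' | h'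
      · linarith
      · exact h'
    · intro ε hcomb
      obtain ⟨hα0, heq⟩ := key ε
      set k : ℝ := ε + (d₁ - d₂)/2 with hk_def
      set s : ℝ := Real.sqrt (k^2 + h^2) with hs_def
      have hs2 : s^2 = k^2 + h^2 := Real.sq_sqrt (by positivity)
      have hs_nonneg : 0 ≤ s := Real.sqrt_nonneg _
      have hz : (c₂ * (k + s) - c₁ * h) * α ε 0 = 0 := by
        linear_combination c₂ * heq - h * hcomb
      have hceq : c₂ * (k + s) = c₁ * h := by
        rcases mul_eq_zero.mp hz with h' | h'
        · linarith
        · exact absurd h' (ne_of_gt hα0)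
      have hcs : c₂ * s = c₁ * h - c₂ * k := by linarith
      have hsq : (c₂ * s)^2 = (c₁ * h - c₂ * k)^2 := by rw [hcs]
      have h3 : h * (2*c₁*c₂*k - (c₁^2 - c₂^2)*h) = 0 := by
        linear_combination hsq - c₂^2 * hs2
      have hk : 2*c₁*c₂*k = (c₁^2 - c₂^2)*h := by
        rcases mul_eq_zero.mp h3 with h' | h'
        · linarith
        · linarith
      rw [eq_sub_iff_add_eq, eq_div_iff (by positivity : (2*c₁*c₂ : ℝ) ≠ 0)]
      linear_combination hk - 2*c₁*c₂ * hk_def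
end

section
/- Let A be a real symmetric n×n matrix with A i j ≤ 0 for all i ≠ j, and let D, D' be diagonal real matrices. Then both A + D and A + D' have lowest-eigenvalue eigenvectors with all non-negative components. In other words, the existence of a phase-coherent ground state is invariant under arbitrary changes of the diagonal (single-particle energies). -/
/-!
Let `μ` be the least eigenvalue of the real symmetric matrix `M` and `u` an eigenvector for it.
Then `M - μ • 1` is positive semidefinite, so `μ ‖x‖² ≤ xᵀ M x` for all `x`, and any `x` attaining
equality lies in the kernel of `M - μ • 1`. Since the off-diagonal entries of `M` are non-positive,
passing from `u` to `|u|` does not increase `xᵀ M x` and keeps `‖x‖²`, so `|u|` attains equality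
and is a non-negative eigenvector for `μ`. Adding a diagonal matrix preserves both symmetry and the
off-diagonal entries.
-/

open Matrix

namespace Matrix

variable {ι : Type*} [Fintype ι]

lemma dotProduct_abs_mulVec_abs_le_s11 {R : Type*} [CommRing R] [LinearOrder R]
    [IsStrictOrderedRing R]
    {M : Matrix ι ι R} (hoff : ∀ i j, i ≠ j → M i j ≤ 0) (x : ι → R) :
    |x| ⬝ᵥ M *ᵥ |x| ≤ x ⬝ᵥ M *ᵥ x := by
  simp only [dotProduct, mulVec, Finset.mul_sum]
  refine Finset.sum_le_sum fun i _ => Finset.sum_le_sum fun j _ => ?_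
  simp only [Pi.abs_apply, mul_left_comm _ (M i j)]
  rcases eq_or_ne i j with rfl | hij
  · rw [abs_mul_abs_self]
  · exact mul_le_mul_of_nonpos_left (by simpa only [abs_mul] using le_abs_self (x i * x j))
      (hoff i j hij)

lemma dotProduct_abs_self {R : Type*} [CommRing R] [LinearOrder R] [IsStrictOrderedRing R]
    (x : ι → R) : |x| ⬝ᵥ |x| = x ⬝ᵥ x :=
  Finset.sum_congr rfl fun i _ => abs_mul_abs_self (x i)

variable [DecidableEq ι] {M : Matrix ι ι ℝ} {μ : ℝ}

lemma IsHermitian.posSemidef_sub_smul_one (hM : M.IsHermitian) (hμ : ∀ i, μ ≤ hM.eigenvalues i) :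
    (M - μ • 1).PosSemidef := by
  refine posSemidef_iff_isHermitian_and_spectrum_nonneg.2
    ⟨hM.sub (isHermitian_one.smul (IsSelfAdjoint.all μ)), ?_⟩
  rw [← Algebra.algebraMap_eq_smul_one, ← spectrum.sub_singleton_eq,
    hM.spectrum_real_eq_range_eigenvalues]
  rintro _ ⟨_, ⟨i, rfl⟩, _, rfl, rfl⟩
  exact sub_nonneg.2 (hμ i)

namespace PosSemidef

variable (hM : (M - μ • 1).PosSemidef)
include hM

lemma smul_dotProduct_self_le (x : ι → ℝ) : μ * (x ⬝ᵥ x) ≤ x ⬝ᵥ M *ᵥ x := by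
  simpa [sub_mulVec, smul_mulVec, dotProduct_sub] using hM.dotProduct_mulVec_nonneg x

lemma le_of_mulVec_eq_smul {μ' : ℝ} {w : ι → ℝ} (hw : w ≠ 0) (hMw : M *ᵥ w = μ' • w) :
    μ ≤ μ' := by
  have h := hM.smul_dotProduct_self_le w
  rw [hMw, dotProduct_smul, smul_eq_mul] at h
  exact le_of_mul_le_mul_right h (by simpa using dotProduct_star_self_pos_iff.2 hw)

lemma mulVec_eq_smul_of_dotProduct_mulVec_le {x : ι → ℝ} (hx : x ⬝ᵥ M *ᵥ x ≤ μ * (x ⬝ᵥ x)) :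
    M *ᵥ x = μ • x := by
  have h := (hM.dotProduct_mulVec_zero_iff x).1 (by
    simp only [star_trivial, sub_mulVec, smul_mulVec, one_mulVec, dotProduct_sub,
      dotProduct_smul, smul_eq_mul]
    linarith [hM.smul_dotProduct_self_le x])
  rwa [sub_mulVec, smul_mulVec, one_mulVec, sub_eq_zero] at h

end PosSemidef

def HasNonnegGroundState (M : Matrix ι ι ℝ) : Prop :=
  ∃ (μ : ℝ) (v : ι → ℝ), v ≠ 0 ∧ M *ᵥ v = μ • v ∧ (∀ i, 0 ≤ v i) ∧
    ∀ (μ' : ℝ) (w : ι → ℝ), w ≠ 0 → M *ᵥ w = μ' • w → μ ≤ μ'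

theorem IsHermitian.hasNonnegGroundState_of_offDiag_nonpos [Nonempty ι] (hM : M.IsHermitian)
    (hoff : ∀ i j, i ≠ j → M i j ≤ 0) : M.HasNonnegGroundState := by
  obtain ⟨i₀, hi₀⟩ := Finite.exists_min hM.eigenvalues
  set μ := hM.eigenvalues i₀
  have hN := hM.posSemidef_sub_smul_one hi₀
  set u : ι → ℝ := ⇑(hM.eigenvectorBasis i₀)
  have hu : u ≠ 0 := fun h =>
    hM.eigenvectorBasis.orthonormal.ne_zero i₀ (by ext i; exact congrFun h i)
  have hv : |u| ⬝ᵥ M *ᵥ |u| ≤ μ * (|u| ⬝ᵥ |u|) := calc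
    |u| ⬝ᵥ M *ᵥ |u| ≤ u ⬝ᵥ M *ᵥ u := dotProduct_abs_mulVec_abs_le_s11 hoff u
    _ = μ * (|u| ⬝ᵥ |u|) := by
      rw [hM.mulVec_eigenvectorBasis i₀, dotProduct_smul, smul_eq_mul, dotProduct_abs_self]
  exact ⟨μ, |u|, (Pi.abs_eq_zero u).not.2 hu, hN.mulVec_eq_smul_of_dotProduct_mulVec_le hv,
    fun i => abs_nonneg (u i), fun _ _ => hN.le_of_mulVec_eq_smul⟩

theorem IsSymm.hasNonnegGroundState_add_of_isDiag [Nonempty ι] {A D : Matrix ι ι ℝ}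
    (hA : A.IsSymm) (hoff : ∀ i j, i ≠ j → A i j ≤ 0) (hD : D.IsDiag) :
    (A + D).HasNonnegGroundState :=
  (isHermitian_iff_isSymm.2 (hA.add hD.isSymm)).hasNonnegGroundState_of_offDiag_nonpos
    fun i j hij => by simpa only [add_apply, hD hij, add_zero] using hoff i j hij

end Matrix

/-- If A is real symmetric with non-positive off-diagonal entries and D, D' are arbitrary
real diagonal matrices, then both A + D and A + D' possess a componentwise non-negative
eigenvector for their lowest eigenvalue. -/
theorem stmt_11 (n : ℕ) (hn : 1 ≤ n) (A D D' : Matrix (Fin n) (Fin n) ℝ)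
    (hsymm : ∀ i j, A i j = A j i)
    (hoff : ∀ i j, i ≠ j → A i j ≤ 0)
    (hD : D.IsDiag) (hD' : D'.IsDiag) :
    (∃ (μ : ℝ) (v : Fin n → ℝ), v ≠ 0 ∧ (A + D).mulVec v = μ • v ∧ (∀ i, 0 ≤ v i) ∧
      ∀ (μ' : ℝ) (w : Fin n → ℝ), w ≠ 0 → (A + D).mulVec w = μ' • w → μ ≤ μ') ∧
    (∃ (μ : ℝ) (v : Fin n → ℝ), v ≠ 0 ∧ (A + D').mulVec v = μ • v ∧ (∀ i, 0 ≤ v i) ∧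
      ∀ (μ' : ℝ) (w : Fin n → ℝ), w ≠ 0 → (A + D').mulVec w = μ' • w → μ ≤ μ') := by
  have : Nonempty (Fin n) := ⟨⟨0, hn⟩⟩
  have hA : A.IsSymm := IsSymm.ext fun i j => hsymm j i
  exact ⟨hA.hasNonnegGroundState_add_of_isDiag hoff hD,
    hA.hasNonnegGroundState_add_of_isDiag hoff hD'⟩
end
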